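/- In a deterministic MDP (where the transition function is deterministic: for each (s, a) there is a unique next state), every trajectory statistic I satisfies the independence condition P(s_{t+1} | h_t, a_t, I = z) = P(s_{t+1} | h_t, a_t) on positive-probability events; hence every goal z with p(I = z) > 0 is consistently achievable by the RvS conditional policy. -/
import Mathlib


namespace Stmt13

open scoped Classical

/-- A length-`T` trajectory `(s₀, a₀, s₁, …, s_T)` in a finite MDP. -/
abbrev Traj (S A : Type) (T : ℕ) := (Fin (T + 1) → S) × (Fin T → A)

/-- Probability of an event under a pmf `p` on trajectories. -/
noncomputable def pr {S A : Type} [Fintype S] [Fintype A] {T : ℕ}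
    (p : Traj S A T → ℝ) (E : Traj S A T → Prop) : ℝ :=
  ∑ τ, if E τ then p τ else 0

/-- `τ'` agrees with `τ` on the history `h_t = (s₀, a₀, …, a_{t-1}, s_t)`. -/
def histEq {S A : Type} {T : ℕ} (τ τ' : Traj S A T) (t : ℕ) : Prop :=
  (∀ i : Fin (T + 1), (i : ℕ) ≤ t → τ'.1 i = τ.1 i) ∧
  (∀ j : Fin T, (j : ℕ) < t → τ'.2 j = τ.2 j)

/-- `τ'` agrees with `τ` on the history `h_t` together with the action `a_t`. -/
def histActEq {S A : Type} {T : ℕ} (τ τ' : Traj S A T) (t : ℕ) : Prop :=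
  histEq τ τ' t ∧ ∀ j : Fin T, (j : ℕ) ≤ t → τ'.2 j = τ.2 j

/-- True environment transition `P(s_{t+1} = s' | h_t, a_t)` along `τ`. -/
noncomputable def trans {S A : Type} [Fintype S] [Fintype A] {T : ℕ}
    (p : Traj S A T → ℝ) (τ : Traj S A T) (t : Fin T) (s' : S) : ℝ :=
  pr p (fun τ' => histActEq τ τ' t ∧ τ'.1 t.succ = s') /
    pr p (fun τ' => histActEq τ τ' t)

/-- Conditioned transition `P(s_{t+1} = s' | h_t, a_t, I = z)` along `τ`. -/
noncomputable def transCond {S A G : Type} [Fintype S] [Fintype A] {T : ℕ}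
    (p : Traj S A T → ℝ) (I : Traj S A T → G) (z : G)
    (τ : Traj S A T) (t : Fin T) (s' : S) : ℝ :=
  pr p (fun τ' => histActEq τ τ' t ∧ I τ' = z ∧ τ'.1 t.succ = s') /
    pr p (fun τ' => histActEq τ τ' t ∧ I τ' = z)

/-- History-conditioned RvS policy `π(a_t = a | h_t, I = z)` along `τ`. -/
noncomputable def condPolicy {S A G : Type} [Fintype S] [Fintype A] {T : ℕ}
    (p : Traj S A T → ℝ) (I : Traj S A T → G) (z : G)
    (τ : Traj S A T) (t : Fin T) (a : A) : ℝ :=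
  pr p (fun τ' => histEq τ τ' t ∧ I τ' = z ∧ τ'.2 t = a) /
    pr p (fun τ' => histEq τ τ' t ∧ I τ' = z)

/-- Distribution over trajectories obtained by executing the conditional policy
in the true environment, starting from state `s0`. -/
noncomputable def rollout {S A G : Type} [Fintype S] [Fintype A] {T : ℕ}
    (p : Traj S A T → ℝ) (I : Traj S A T → G) (z : G) (s0 : S)
    (τ : Traj S A T) : ℝ :=
  (if τ.1 0 = s0 then 1 else 0) *
    ∏ t : Fin T, condPolicy p I z τ t (τ.2 t) * trans p τ t (τ.1 t.succ)


section Helpers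

variable {S A : Type} [Fintype S] [Fintype A] {T : ℕ}

lemma pr_nonneg (p : Traj S A T → ℝ) (hp : ∀ τ, 0 ≤ p τ) (E : Traj S A T → Prop) :
    0 ≤ pr p E := by
  refine Finset.sum_nonneg fun τ _ => ?_
  by_cases h : E τ <;> simp [h, hp τ]

lemma pr_mono (p : Traj S A T → ℝ) (hp : ∀ τ, 0 ≤ p τ) {E F : Traj S A T → Prop}
    (h : ∀ τ, E τ → F τ) : pr p E ≤ pr p F := by
  refine Finset.sum_le_sum fun τ _ => ?_
  by_cases hE : E τ
  · simp [hE, h τ hE]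
  · simp only [hE, if_false]
    by_cases hF : F τ <;> simp [hF, hp τ]

lemma pr_pos_of_witness (p : Traj S A T → ℝ) (hp : ∀ τ, 0 ≤ p τ)
    {E : Traj S A T → Prop} {τ : Traj S A T} (hE : E τ) (hpτ : 0 < p τ) :
    0 < pr p E := by
  have : p τ = (if E τ then p τ else 0) := by simp [hE]
  calc 0 < p τ := hpτ
    _ = (if E τ then p τ else 0) := this
    _ ≤ pr p E := by
        refine Finset.single_le_sum (f := fun τ' => if E τ' then p τ' else 0)
          (fun τ' _ => ?_) (Finset.mem_univ τ)
        by_cases h : E τ' <;> simp [h, hp τ']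

lemma pr_exists_of_ne_zero (p : Traj S A T → ℝ) (hp : ∀ τ, 0 ≤ p τ)
    {E : Traj S A T → Prop} (h : pr p E ≠ 0) : ∃ τ, E τ ∧ 0 < p τ := by
  by_contra hc
  push_neg at hc
  apply h
  refine Finset.sum_eq_zero fun τ _ => ?_
  by_cases hE : E τ
  · simp [hE, le_antisymm (hc τ hE) (hp τ)]
  · simp [hE]

lemma pr_congr_support (p : Traj S A T → ℝ) (hp : ∀ τ, 0 ≤ p τ)
    {E F : Traj S A T → Prop} (h : ∀ τ, 0 < p τ → (E τ ↔ F τ)) :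
    pr p E = pr p F := by
  refine Finset.sum_congr rfl fun τ _ => ?_
  rcases (hp τ).eq_or_lt with h0 | h0
  · by_cases hE : E τ <;> by_cases hF : F τ <;> simp [hE, hF, ← h0]
  · simp [h τ h0]

lemma pr_congr (p : Traj S A T → ℝ) {E F : Traj S A T → Prop}
    (h : ∀ τ, E τ ↔ F τ) : pr p E = pr p F := by
  refine Finset.sum_congr rfl fun τ _ => ?_
  simp [h τ]

end Helpers


/-- In a deterministic MDP every trajectory statistic satisfies the independence
condition, hence every goal of positive probability is consistently achievable
by the RvS conditional policy. -/

theorem stmt_13 {S A G : Type} [Fintype S] [Fintype A] {T : ℕ}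
    (Tf : S → A → S) (p : Traj S A T → ℝ) (I : Traj S A T → G)
    (hp : ∀ τ, 0 ≤ p τ) (hsum : ∑ τ, p τ = 1)
    (hdet : ∀ τ, 0 < p τ → ∀ t : Fin T, τ.1 t.succ = Tf (τ.1 t.castSucc) (τ.2 t)) :
    (∀ (z : G) (τ : Traj S A T) (t : Fin T) (s' : S),
      0 < pr p (fun τ' => histActEq τ τ' t ∧ I τ' = z) →
      transCond p I z τ t s' = trans p τ t s') ∧
    (∀ (z : G) (s0 : S) (D : G → G → ℝ),
      (∀ x y, 0 ≤ D x y) → (∀ x y, D x y = 0 ↔ x = y) →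
      0 < pr p (fun τ => τ.1 0 = s0 ∧ I τ = z) →
      ∑ τ, rollout p I z s0 τ * D (I τ) z = 0) := by
  -- determinism in pr form
  have key : ∀ (E : Traj S A T → Prop) (τ : Traj S A T) (t : Fin T) (s' : S),
      (∀ τ', E τ' → histActEq τ τ' t) →
      pr p (fun τ' => E τ' ∧ τ'.1 t.succ = s') =
        if s' = Tf (τ.1 t.castSucc) (τ.2 t) then pr p E else 0 := by
    intro E τ t s' hEh
    have hnext : ∀ τ', 0 < p τ' → E τ' → τ'.1 t.succ = Tf (τ.1 t.castSucc) (τ.2 t) := by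
      intro τ' hpτ hEτ
      have hh := hEh τ' hEτ
      have hs : τ'.1 t.castSucc = τ.1 t.castSucc :=
        hh.1.1 t.castSucc (by simp)
      have ha : τ'.2 t = τ.2 t := hh.2 t le_rfl
      rw [hdet τ' hpτ t, hs, ha]
    by_cases hs' : s' = Tf (τ.1 t.castSucc) (τ.2 t)
    · rw [if_pos hs']
      refine pr_congr_support p hp fun τ' hpτ => ?_
      constructor
      · exact fun h => h.1
      · exact fun h => ⟨h, by rw [hnext τ' hpτ h, hs']⟩
    · rw [if_neg hs']
      refine Finset.sum_eq_zero fun τ' _ => ?_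
      by_cases hE : E τ' ∧ τ'.1 t.succ = s'
      · rcases (hp τ').eq_or_lt with h0 | h0
        · simp [hE, ← h0]
        · exact absurd (hE.2.symm.trans (hnext τ' h0 hE.1)) hs'
      · simp [hE]
  constructor
  · -- Part 1
    intro z τ t s' hpos
    have hden : 0 < pr p (fun τ' => histActEq τ τ' t) :=
      lt_of_lt_of_le hpos (pr_mono p hp fun τ' h => h.1)
    have h1 : pr p (fun τ' => histActEq τ τ' t ∧ τ'.1 t.succ = s') =
        if s' = Tf (τ.1 t.castSucc) (τ.2 t) then pr p (fun τ' => histActEq τ τ' t) else 0 :=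
      key _ τ t s' fun τ' h => h
    have h2 : pr p (fun τ' => (histActEq τ τ' t ∧ I τ' = z) ∧ τ'.1 t.succ = s') =
        if s' = Tf (τ.1 t.castSucc) (τ.2 t) then
          pr p (fun τ' => histActEq τ τ' t ∧ I τ' = z) else 0 :=
      key _ τ t s' fun τ' h => h.1
    have h2' : pr p (fun τ' => histActEq τ τ' t ∧ I τ' = z ∧ τ'.1 t.succ = s') =
        pr p (fun τ' => (histActEq τ τ' t ∧ I τ' = z) ∧ τ'.1 t.succ = s') :=
      pr_congr p fun τ' => by tauto
    unfold transCond trans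
    rw [h2', h2, h1]
    by_cases hs' : s' = Tf (τ.1 t.castSucc) (τ.2 t)
    · rw [if_pos hs', if_pos hs', div_self hpos.ne', div_self hden.ne']
    · rw [if_neg hs', if_neg hs', zero_div, zero_div]
  · -- Part 2
    intro z s0 D hD0 hDiff hpos
    refine Finset.sum_eq_zero fun τ _ => ?_
    by_cases hr : rollout p I z s0 τ = 0
    · rw [hr, zero_mul]
    · suffices hIz : I τ = z by rw [hIz, (hDiff z z).2 rfl, mul_zero]
      unfold rollout at hr
      have h0 : τ.1 0 = s0 := by
        by_contra h; rw [if_neg h, zero_mul] at hr; exact hr rfl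
      have hprod : ∀ t : Fin T,
          condPolicy p I z τ t (τ.2 t) ≠ 0 ∧ trans p τ t (τ.1 t.succ) ≠ 0 := by
        intro t
        have : (condPolicy p I z τ t (τ.2 t) * trans p τ t (τ.1 t.succ)) ≠ 0 := by
          intro h
          apply hr
          rw [Finset.prod_eq_zero (Finset.mem_univ t) h, mul_zero]
        exact ⟨fun h => this (by rw [h, zero_mul]), fun h => this (by rw [h, mul_zero])⟩
      -- inductive claim
      have main : ∀ n : ℕ, n ≤ T → 0 < pr p (fun τ' => histEq τ τ' n ∧ I τ' = z) := by
        intro n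
        induction n with
        | zero =>
          intro _
          have heq : ∀ τ' : Traj S A T, (histEq τ τ' 0 ∧ I τ' = z) ↔ (τ'.1 0 = s0 ∧ I τ' = z) := by
            intro τ'
            constructor
            · rintro ⟨hh, hI⟩
              exact ⟨by rw [hh.1 0 le_rfl, h0], hI⟩
            · rintro ⟨hs, hI⟩
              refine ⟨⟨fun i hi => ?_, fun j hj => absurd hj (Nat.not_lt_zero _)⟩, hI⟩
              have : i = 0 := Fin.ext (Nat.le_zero.mp hi)
              rw [this, hs, h0]
          rw [pr_congr p heq]
          exact hpos
        | succ n ih =>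
          intro hn
          have hnT : n < T := hn
          have ihp := ih (le_of_lt hnT)
          set t : Fin T := ⟨n, hnT⟩ with ht
          -- witness from condPolicy numerator
          have hcp := (hprod t).1
          have hnum : pr p (fun τ' => histEq τ τ' (t : ℕ) ∧ I τ' = z ∧ τ'.2 t = τ.2 t) ≠ 0 := by
            intro h
            apply hcp
            unfold condPolicy
            rw [h, zero_div]
          obtain ⟨τ', hτ', hpτ'⟩ := pr_exists_of_ne_zero p hp hnum
          -- witness from trans numerator
          have htr := (hprod t).2
          have hnum2 : pr p (fun τ'' => histActEq τ τ'' t ∧ τ''.1 t.succ = τ.1 t.succ) ≠ 0 := by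
            intro h
            apply htr
            unfold trans
            rw [h, zero_div]
          obtain ⟨τ'', hτ'', hpτ''⟩ := pr_exists_of_ne_zero p hp hnum2
          -- from determinism: τ.1 t.succ = Tf …
          have hτs : τ.1 t.succ = Tf (τ.1 t.castSucc) (τ.2 t) := by
            have h1 := hdet τ'' hpτ'' t
            have hs : τ''.1 t.castSucc = τ.1 t.castSucc := hτ''.1.1.1 t.castSucc (by simp)
            have ha : τ''.2 t = τ.2 t := hτ''.1.2 t le_rfl
            rw [← hτ''.2, h1, hs, ha]
          -- τ' also matches at t.succ
          have hτ's : τ'.1 t.succ = τ.1 t.succ := by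
            have h1 := hdet τ' hpτ' t
            have hs : τ'.1 t.castSucc = τ.1 t.castSucc := hτ'.1.1 t.castSucc (by simp)
            rw [h1, hs, hτ'.2.2, ← hτs]
          -- build histEq at n+1
          have hhe : histEq τ τ' (n + 1) := by
            constructor
            · intro i hi
              rcases Nat.lt_or_ge (i : ℕ) (n + 1) with h | h
              · exact hτ'.1.1 i (Nat.lt_succ_iff.mp h)
              · have : (i : ℕ) = n + 1 := le_antisymm hi h
                have hit : i = t.succ := Fin.ext (by simp [this, ht])
                rw [hit, hτ's]
            · intro j hj
              rcases Nat.lt_or_ge (j : ℕ) n with h | h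
              · exact hτ'.1.2 j h
              · have : (j : ℕ) = n := le_antisymm (Nat.lt_succ_iff.mp hj) h
                have hjt : j = t := Fin.ext (by simp [this, ht])
                rw [hjt, hτ'.2.2]
          exact pr_pos_of_witness p hp ⟨hhe, hτ'.2.1⟩ hpτ'
      -- conclude at n = T
      obtain ⟨τ', hτ', hpτ'⟩ := pr_exists_of_ne_zero p hp (main T le_rfl).ne'
      have : τ' = τ := by
        ext
        · exact congrFun (funext fun i => hτ'.1.1 i (Nat.lt_succ_iff.mp i.isLt)) _
        · exact congrFun (funext fun j => hτ'.1.2 j j.isLt) _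
      rw [← this]
      exact hτ'.2


end Stmt13
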